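/- arXiv:2406.04857 — 4 statements merged into one kernel-verified Lean document; each statement's English description precedes it below -/
import Mathlib

section
/- Let δ > 0 and let v_i, v_j, v_k ∈ ℝ^d satisfy the ℓ₂² triangle inequalities ‖v_i − v_k‖² ≤ ‖v_i − v_j‖² + ‖v_j − v_k‖² and ‖v_j − v_k‖² ≤ ‖v_j − v_i‖² + ‖v_i − v_k‖². Let r be uniformly distributed on the interval [1,2]. Then the probability that the threshold 2rδ separates i and j with respect to the ball around k, i.e. P( exactly one of ‖v_k − v_i‖² ≤ 2rδ and ‖v_k − v_j‖² ≤ 2rδ holds ), is at most ‖v_i − v_j‖²/(2δ). -/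
open MeasureTheory

/-- the random threshold 2rδ, with r uniform on [1,2], separates i and j
with respect to the ball around k with probability at most ‖v_i − v_j‖²/(2δ). -/
theorem stmt_7 (d : ℕ) (δ : ℝ) (hδ : 0 < δ)
    (vi vj vk : EuclideanSpace ℝ (Fin d))
    (htri1 : ‖vi - vk‖ ^ 2 ≤ ‖vi - vj‖ ^ 2 + ‖vj - vk‖ ^ 2)
    (htri2 : ‖vj - vk‖ ^ 2 ≤ ‖vj - vi‖ ^ 2 + ‖vi - vk‖ ^ 2) :
    (volume.restrict (Set.Icc (1 : ℝ) 2))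
        {r : ℝ | Xor' (‖vk - vi‖ ^ 2 ≤ 2 * r * δ) (‖vk - vj‖ ^ 2 ≤ 2 * r * δ)}
      ≤ ENNReal.ofReal (‖vi - vj‖ ^ 2 / (2 * δ)) := by
  rw [norm_sub_rev vi vk] at htri1 htri2
  rw [norm_sub_rev vj vk] at htri1 htri2
  rw [norm_sub_rev vj vi] at htri2
  set a := ‖vk - vi‖ ^ 2 with ha
  set b := ‖vk - vj‖ ^ 2 with hb
  set c := ‖vi - vj‖ ^ 2 with hc
  have h2δ : (0:ℝ) < 2 * δ := by linarith
  have hsub : {r : ℝ | Xor' (a ≤ 2 * r * δ) (b ≤ 2 * r * δ)} ⊆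
      Set.Ico (min a b / (2 * δ)) (max a b / (2 * δ)) := by
    intro r hr
    rcases hr with ⟨h1, h2⟩ | ⟨h1, h2⟩
    · push_neg at h2
      have hab : a < b := lt_of_le_of_lt h1 h2
      constructor
      · rw [div_le_iff₀ h2δ]
        calc min a b ≤ a := min_le_left _ _
          _ ≤ 2 * r * δ := h1
          _ = r * (2 * δ) := by ring
      · rw [lt_div_iff₀ h2δ]
        calc r * (2 * δ) = 2 * r * δ := by ring
          _ < b := h2
          _ ≤ max a b := le_max_right _ _
    · push_neg at h2
      have hab : b < a := lt_of_le_of_lt h1 h2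
      constructor
      · rw [div_le_iff₀ h2δ]
        calc min a b ≤ b := min_le_right _ _
          _ ≤ 2 * r * δ := h1
          _ = r * (2 * δ) := by ring
      · rw [lt_div_iff₀ h2δ]
        calc r * (2 * δ) = 2 * r * δ := by ring
          _ < a := h2
          _ ≤ max a b := le_max_left _ _
  have hdiff : max a b - min a b ≤ c := by
    rcases le_total a b with h | h
    · rw [max_eq_right h, min_eq_left h]; linarith
    · rw [max_eq_left h, min_eq_right h]; linarith
  calc (volume.restrict (Set.Icc (1 : ℝ) 2))
        {r : ℝ | Xor' (a ≤ 2 * r * δ) (b ≤ 2 * r * δ)}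
      ≤ volume {r : ℝ | Xor' (a ≤ 2 * r * δ) (b ≤ 2 * r * δ)} :=
        Measure.restrict_apply_le _ _
    _ ≤ volume (Set.Ico (min a b / (2 * δ)) (max a b / (2 * δ))) := measure_mono hsub
    _ = ENNReal.ofReal (max a b / (2 * δ) - min a b / (2 * δ)) := Real.volume_Ico
    _ ≤ ENNReal.ofReal (c / (2 * δ)) := by
        apply ENNReal.ofReal_le_ofReal
        rw [div_sub_div_same]
        gcongr
end

section
/- Let δ > 0, let v_i, v_j, v_k ∈ ℝ^d, and let r be uniformly distributed on [1,2]. Suppose that P( ‖v_k − v_j‖² ≤ δ(1+r) and ‖v_k − v_i‖² > δ(1+r) ) ≥ 10⁴·‖v_i − v_j‖²/δ. Then ‖v_i − v_k‖² ≥ ‖v_j − v_k‖² + 10⁴·‖v_i − v_j‖². In particular, if additionally ‖v_i − v_j‖ > 0, the triple (i,j,k) violates the ℓ₂² triangle inequality ‖v_i − v_k‖² ≤ ‖v_i − v_j‖² + ‖v_j − v_k‖². -/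
open MeasureTheory

/-- if the random radius δ(1+r), r uniform on [1,2], separates j from i around
k with probability at least 10⁴·‖v_i − v_j‖²/δ, then the ℓ₂² triangle inequality for
(i,j,k) is violated by a 10⁴·‖v_i − v_j‖² margin. -/
theorem stmt_8 (d : ℕ) (δ : ℝ) (hδ : 0 < δ)
    (vi vj vk : EuclideanSpace ℝ (Fin d))
    (hprob : ENNReal.ofReal (10 ^ 4 * ‖vi - vj‖ ^ 2 / δ) ≤
      (volume.restrict (Set.Icc (1 : ℝ) 2))
        {r : ℝ | ‖vk - vj‖ ^ 2 ≤ δ * (1 + r) ∧ δ * (1 + r) < ‖vk - vi‖ ^ 2}) :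
    ‖vj - vk‖ ^ 2 + 10 ^ 4 * ‖vi - vj‖ ^ 2 ≤ ‖vi - vk‖ ^ 2 ∧
    (0 < ‖vi - vj‖ → ¬ (‖vi - vk‖ ^ 2 ≤ ‖vi - vj‖ ^ 2 + ‖vj - vk‖ ^ 2)) := by
  have hset : {r : ℝ | ‖vk - vj‖ ^ 2 ≤ δ * (1 + r) ∧ δ * (1 + r) < ‖vk - vi‖ ^ 2}
      = Set.Ico (‖vk - vj‖ ^ 2 / δ - 1) (‖vk - vi‖ ^ 2 / δ - 1) := by
    ext r
    rw [Set.mem_Ico, sub_le_iff_le_add, lt_sub_iff_add_lt, div_le_iff₀ hδ, lt_div_iff₀ hδ,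
      Set.mem_setOf_eq]
    constructor <;> rintro ⟨h1, h2⟩ <;> constructor <;> nlinarith
  have hmeas : (volume.restrict (Set.Icc (1 : ℝ) 2))
      {r : ℝ | ‖vk - vj‖ ^ 2 ≤ δ * (1 + r) ∧ δ * (1 + r) < ‖vk - vi‖ ^ 2}
      ≤ ENNReal.ofReal ((‖vk - vi‖ ^ 2 / δ - 1) - (‖vk - vj‖ ^ 2 / δ - 1)) := by
    rw [hset]
    calc (volume.restrict (Set.Icc (1 : ℝ) 2))
          (Set.Ico (‖vk - vj‖ ^ 2 / δ - 1) (‖vk - vi‖ ^ 2 / δ - 1))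
        ≤ volume (Set.Ico (‖vk - vj‖ ^ 2 / δ - 1) (‖vk - vi‖ ^ 2 / δ - 1)) :=
          Measure.restrict_le_self _
      _ = ENNReal.ofReal ((‖vk - vi‖ ^ 2 / δ - 1) - (‖vk - vj‖ ^ 2 / δ - 1)) := by
          rw [Real.volume_Ico]
  have h := hprob.trans hmeas
  rw [ENNReal.ofReal_le_ofReal_iff'] at h
  have hnn : 0 ≤ 10 ^ 4 * ‖vi - vj‖ ^ 2 / δ := by positivity
  have hij : ‖vi - vk‖ = ‖vk - vi‖ := norm_sub_rev _ _
  have hjk : ‖vj - vk‖ = ‖vk - vj‖ := norm_sub_rev _ _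
  rcases h with h | h
  · have key : 10 ^ 4 * ‖vi - vj‖ ^ 2 ≤ ‖vk - vi‖ ^ 2 - ‖vk - vj‖ ^ 2 := by
      have h2 := mul_le_mul_of_nonneg_right h hδ.le
      have e1 : 10 ^ 4 * ‖vi - vj‖ ^ 2 / δ * δ = 10 ^ 4 * ‖vi - vj‖ ^ 2 :=
        div_mul_cancel₀ _ (ne_of_gt hδ)
      have e2 : (‖vk - vi‖ ^ 2 / δ - 1 - (‖vk - vj‖ ^ 2 / δ - 1)) * δ
          = ‖vk - vi‖ ^ 2 / δ * δ - ‖vk - vj‖ ^ 2 / δ * δ := by ring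
      have e3 : ‖vk - vi‖ ^ 2 / δ * δ = ‖vk - vi‖ ^ 2 := div_mul_cancel₀ _ (ne_of_gt hδ)
      have e4 : ‖vk - vj‖ ^ 2 / δ * δ = ‖vk - vj‖ ^ 2 := div_mul_cancel₀ _ (ne_of_gt hδ)
      rw [e1, e2, e3, e4] at h2
      linarith
    constructor
    · rw [hij, hjk]; linarith
    · intro hpos hle
      rw [hij, hjk] at hle
      nlinarith
  · have h0 : ‖vi - vj‖ ^ 2 = 0 := by
      have : 10 ^ 4 * ‖vi - vj‖ ^ 2 / δ = 0 := le_antisymm h hnn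
      have := (div_eq_zero_iff.mp this).resolve_right (ne_of_gt hδ)
      nlinarith
    have h0' : ‖vi - vj‖ = 0 := by nlinarith [norm_nonneg (vi - vj)]
    have heq : vi = vj := by
      have := norm_eq_zero.mp h0'
      exact sub_eq_zero.mp this
    subst heq
    constructor
    · rw [h0']; ring_nf; linarith
    · intro hpos; rw [h0'] at hpos; exact absurd hpos (lt_irrefl 0)
end

section
/- Let n ≥ 2, δ ∈ (0,1), ρ ≥ 2, and m ≤ n, and let v_1, …, v_m ∈ ℝ^d satisfy the ℓ₂² triangle inequalities ‖v_x − v_z‖² ≤ ‖v_x − v_y‖² + ‖v_y − v_z‖² for all x,y,z ∈ [m]. Let S be a sequence of ⌈100·δ^{−2}·log n⌉ indices sampled independently and uniformly at random from [m], and define V* = { s ∈ S : |{j ∈ [m] : ‖v_s − v_j‖² ≤ ρδ}| ≥ 10·δ²·n }. Then with probability at least 1 − 1/n, every i ∈ [m] with |{j ∈ [m] : ‖v_i − v_j‖² ≤ δ}| ≥ 10·δ²·n satisfies ‖v_i − v_s‖² ≤ ρδ for some s ∈ V*. (Consequently, the set of vertices mapped to (*) by the procedure contains no vertex whose δ-ball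 holds at least 10δ²n points, while every s ∈ V* has at least 10δ²n points in its ρδ-ball.) -/
/-!
A vertex `i` whose δ-ball holds at least `10δ²n ≥ 10δ²m` of the `m` points is missed by one
uniform sample with probability at most `1 - 10δ² ≤ e^{-10δ²}`, hence by all
`K = ⌈100 δ⁻² log n⌉` samples with probability at most `e^{-10δ²K} ≤ n⁻²`; a union bound over
the at most `n` such vertices leaves failure probability at most `1/n`. If instead some sample
`s` lands in the δ-ball of `i`, the ℓ₂² triangle inequality puts that δ-ball inside the
`2δ`-ball of `s`, so `s` belongs to `V*` and lies within `ρδ` of `i`.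
-/

open MeasureTheory
open scoped ENNReal

/-- The uniform distribution on `Fin m` (for `0 < m`). -/
noncomputable abbrev unif (m : ℕ) (h : 0 < m) : Measure (Fin m) :=
  (@PMF.uniformOfFintype (Fin m) _ ⟨⟨0, h⟩⟩).toMeasure

/-- The law of a sequence of `K` independent uniform samples from `[m]`. -/
noncomputable def sampleMeasure (m K : ℕ) (h : 0 < m) : Measure (Fin K → Fin m) :=
  Measure.pi fun _ => unif m h

section SqBall

variable {ι E : Type*} [SeminormedAddCommGroup E]

def sqBall (v : ι → E) (i : ι) (r : ℝ) : Set ι := {j | ‖v i - v j‖ ^ 2 ≤ r}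

theorem sqBall_subset_sqBall_of_mem {v : ι → E}
    (htri : ∀ x y z : ι, ‖v x - v z‖ ^ 2 ≤ ‖v x - v y‖ ^ 2 + ‖v y - v z‖ ^ 2)
    {i s : ι} {δ ρ : ℝ} (hρ : 2 ≤ ρ) (hs : s ∈ sqBall v i δ) :
    sqBall v i δ ⊆ sqBall v s (ρ * δ) := by
  intro j hj
  have hδ : 0 ≤ δ := (sq_nonneg _).trans hs
  have hsi : ‖v s - v i‖ ^ 2 ≤ δ := by rwa [norm_sub_rev]
  calc ‖v s - v j‖ ^ 2 ≤ ‖v s - v i‖ ^ 2 + ‖v i - v j‖ ^ 2 := htri s i j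
    _ ≤ 2 * δ := by linarith [show ‖v i - v j‖ ^ 2 ≤ δ from hj]
    _ ≤ ρ * δ := by nlinarith

end SqBall

section Sampling

variable {m K : ℕ} (h : 0 < m)

theorem unif_apply (B : Set (Fin m)) : unif m h B = B.ncard / m := by
  classical
  have : Nonempty (Fin m) := ⟨⟨0, h⟩⟩
  rw [PMF.toMeasure_uniformOfFintype_apply _ B.to_countable.measurableSet,
    Fintype.card_fin, ← Nat.card_coe_set_eq, Nat.card_eq_fintype_card]

instance : IsProbabilityMeasure (sampleMeasure m K h) := by
  rw [sampleMeasure]; infer_instance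

theorem sampleMeasure_forall_mem (B : Set (Fin m)) :
    sampleMeasure m K h {ω | ∀ s, ω s ∈ B} = unif m h B ^ K := by
  have hpi : {ω : Fin K → Fin m | ∀ s, ω s ∈ B} = Set.univ.pi fun _ => B := by
    ext ω; simp
  rw [hpi, sampleMeasure, Measure.pi_pi, Finset.prod_const, Finset.card_univ, Fintype.card_fin]

theorem sampleMeasure_forall_notMem_le {c : ℝ} {B : Set (Fin m)} (hB : c * m ≤ B.ncard) :
    sampleMeasure m K h {ω | ∀ s, ω s ∉ B} ≤ ENNReal.ofReal (Real.exp (-(c * K))) := by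
  have hm : (0 : ℝ) < m := by exact_mod_cast h
  have hcompl : (Bᶜ.ncard : ℝ) = m - B.ncard := by
    have := Set.ncard_add_ncard_compl B
    rw [Nat.card_eq_fintype_card, Fintype.card_fin] at this
    have := congrArg (Nat.cast (R := ℝ)) this
    push_cast at this
    linarith
  have hmiss : (Bᶜ.ncard : ℝ) / m ≤ Real.exp (-c) := by
    rw [div_le_iff₀ hm]
    nlinarith [Real.add_one_le_exp (-c)]
  calc sampleMeasure m K h {ω | ∀ s, ω s ∉ B}
      = ENNReal.ofReal ((Bᶜ.ncard : ℝ) / m) ^ K := by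
        change sampleMeasure m K h {ω | ∀ s, ω s ∈ Bᶜ} = _
        rw [sampleMeasure_forall_mem, unif_apply,
          ENNReal.ofReal_div_of_pos hm, ENNReal.ofReal_natCast, ENNReal.ofReal_natCast]
    _ ≤ ENNReal.ofReal (Real.exp (-c)) ^ K := by gcongr
    _ = ENNReal.ofReal (Real.exp (-(c * K))) := by
        rw [← ENNReal.ofReal_pow (Real.exp_nonneg _), ← Real.exp_nat_mul]
        ring_nf

theorem sampleMeasure_exists_missed_le {n : ℕ} (hmn : m ≤ n) {c : ℝ} (hc : 0 ≤ c)
    (B : Fin m → Set (Fin m)) :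
    sampleMeasure m K h {ω | ∃ i, c * n ≤ (B i).ncard ∧ ∀ s, ω s ∉ B i} ≤
      ENNReal.ofReal (n * Real.exp (-(c * K))) := by
  have hterm : ∀ i, sampleMeasure m K h {ω | c * n ≤ (B i).ncard ∧ ∀ s, ω s ∉ B i} ≤
      ENNReal.ofReal (Real.exp (-(c * K))) := by
    intro i
    by_cases hi : c * n ≤ (B i).ncard
    · refine (measure_mono fun ω hω => hω.2).trans (sampleMeasure_forall_notMem_le h ?_)
      exact le_trans (by gcongr) hi
    · simp [hi]
  rw [Set.ofPred_exists]
  calc _ ≤ ∑ i, sampleMeasure m K h {ω | c * n ≤ (B i).ncard ∧ ∀ s, ω s ∉ B i} :=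
        measure_iUnion_fintype_le _ _
    _ ≤ ∑ _i : Fin m, ENNReal.ofReal (Real.exp (-(c * K))) := Finset.sum_le_sum fun i _ => hterm i
    _ = m * ENNReal.ofReal (Real.exp (-(c * K))) := by simp
    _ ≤ n * ENNReal.ofReal (Real.exp (-(c * K))) := by gcongr
    _ = ENNReal.ofReal (n * Real.exp (-(c * K))) := by
        rw [ENNReal.ofReal_mul (Nat.cast_nonneg n), ENNReal.ofReal_natCast]

end Sampling

theorem Real.mul_exp_neg_le_inv {x t : ℝ} (hx : 0 < x) (ht : 2 * Real.log x ≤ t) :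
    x * Real.exp (-t) ≤ x⁻¹ := by
  have hexp : Real.exp (-t) ≤ (x ^ 2)⁻¹ := by
    calc Real.exp (-t) ≤ Real.exp (-(2 * Real.log x)) := Real.exp_le_exp.mpr (by linarith)
      _ = (x ^ 2)⁻¹ := by
        rw [Real.exp_neg, mul_comm, Real.exp_mul, Real.exp_log hx, Real.rpow_two]
  calc x * Real.exp (-t) ≤ x * (x ^ 2)⁻¹ := by gcongr
    _ = x⁻¹ := by field_simp

theorem stmt_10_general (n m d : ℕ) (hm : 0 < m) (hmn : m ≤ n)
    (δ ρ : ℝ) (hδ0 : 0 < δ) (hρ : 2 ≤ ρ)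
    (v : Fin m → EuclideanSpace ℝ (Fin d))
    (htri : ∀ x y z : Fin m, ‖v x - v z‖ ^ 2 ≤ ‖v x - v y‖ ^ 2 + ‖v y - v z‖ ^ 2) :
    1 - ((n : ℝ≥0∞))⁻¹ ≤
      sampleMeasure m (Nat.ceil (100 * δ⁻¹ ^ 2 * Real.log n)) hm
        {ω | ∀ i : Fin m,
          10 * δ ^ 2 * (n : ℝ) ≤ (({j : Fin m | ‖v i - v j‖ ^ 2 ≤ δ}).ncard : ℝ) →
          ∃ s, (10 * δ ^ 2 * (n : ℝ) ≤
                  (({j : Fin m | ‖v (ω s) - v j‖ ^ 2 ≤ ρ * δ}).ncard : ℝ)) ∧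
            ‖v i - v (ω s)‖ ^ 2 ≤ ρ * δ} := by
  set K := Nat.ceil (100 * δ⁻¹ ^ 2 * Real.log n)
  set bad := {ω : Fin K → Fin m |
    ∃ i, 10 * δ ^ 2 * n ≤ (sqBall v i δ).ncard ∧ ∀ s, ω s ∉ sqBall v i δ}
  have hn : (0 : ℝ) < n := by exact_mod_cast hm.trans_le hmn
  have hK : 2 * Real.log n ≤ 10 * δ ^ 2 * K := by
    have hlog := Real.log_natCast_nonneg n
    calc 2 * Real.log n ≤ 10 * δ ^ 2 * (100 * δ⁻¹ ^ 2 * Real.log n) := by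
          field_simp; linarith
      _ ≤ 10 * δ ^ 2 * K := by gcongr; exact Nat.le_ceil _
  have hbad : sampleMeasure m K hm bad ≤ (n : ℝ≥0∞)⁻¹ := by
    refine (sampleMeasure_exists_missed_le hm hmn (by positivity) _).trans ?_
    rw [← ENNReal.ofReal_natCast, ← ENNReal.ofReal_inv_of_pos hn]
    exact ENNReal.ofReal_le_ofReal (Real.mul_exp_neg_le_inv hn hK)
  refine le_trans ?_ (measure_mono (s := badᶜ) ?_)
  · calc 1 - (n : ℝ≥0∞)⁻¹ ≤ 1 - sampleMeasure m K hm bad := tsub_le_tsub_left hbad 1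
      _ = sampleMeasure m K hm badᶜ :=
        (prob_compl_eq_one_sub bad.to_countable.measurableSet).symm
  · intro ω hω i hi
    simp only [bad, Set.mem_compl_iff, Set.mem_ofPred_eq, not_exists, not_and, not_forall,
      not_not] at hω
    obtain ⟨s, hs⟩ := hω i hi
    refine ⟨s, hi.trans ?_, (show ‖v i - v (ω s)‖ ^ 2 ≤ δ from hs).trans (by nlinarith)⟩
    exact_mod_cast Set.ncard_le_ncard (sqBall_subset_sqBall_of_mem htri hρ hs)

/-- correctness of the randomized heavy-vertex identification subroutine.
With probability ≥ 1 − 1/n, every vertex whose δ-ball (squared distance) contains at least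
10δ²n points lies within squared distance ρδ of a sampled point whose ρδ-ball contains at
least 10δ²n points (an approximate heavy center in V*). -/
theorem stmt_10 (n m d : ℕ) (hn : 2 ≤ n) (hm : 0 < m) (hmn : m ≤ n)
    (δ ρ : ℝ) (hδ0 : 0 < δ) (hδ1 : δ < 1) (hρ : 2 ≤ ρ)
    (v : Fin m → EuclideanSpace ℝ (Fin d))
    (htri : ∀ x y z : Fin m, ‖v x - v z‖ ^ 2 ≤ ‖v x - v y‖ ^ 2 + ‖v y - v z‖ ^ 2) :
    1 - ((n : ℝ≥0∞))⁻¹ ≤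
      sampleMeasure m (Nat.ceil (100 * δ⁻¹ ^ 2 * Real.log n)) hm
        {ω | ∀ i : Fin m,
          10 * δ ^ 2 * (n : ℝ) ≤ (({j : Fin m | ‖v i - v j‖ ^ 2 ≤ δ}).ncard : ℝ) →
          ∃ s, (10 * δ ^ 2 * (n : ℝ) ≤
                  (({j : Fin m | ‖v (ω s) - v j‖ ^ 2 ≤ ρ * δ}).ncard : ℝ)) ∧
            ‖v i - v (ω s)‖ ^ 2 ≤ ρ * δ} :=
  stmt_10_general n m d hm hmn δ ρ hδ0 hρ v htri
end

section
/- For every rooted binary tree T with n ≥ 1 leaves, the sum over all unordered pairs {x,y} of distinct leaves of the number of leaves of the subtree rooted at the lowest common ancestor of x and y equals (n³ − n)/3. Equivalently, the Dasgupta cost of the unit-weight complete graph K_n is exactly (n³ − n)/3 for every binary hierarchical-clustering tree. -/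
/-- A rooted binary tree whose leaves are labeled by elements of `V`. -/
inductive HCT (V : Type) : Type
  | leaf : V → HCT V
  | node : HCT V → HCT V → HCT V

namespace HCT

variable {V : Type}

/-- The list of leaf labels of a tree, left to right. -/
def leaves : HCT V → List V
  | .leaf x => [x]
  | .node l r => leaves l ++ leaves r

/-- `lcaSize T x y` is the number of leaves of the subtree of `T` rooted at the lowest
common ancestor of the leaves labeled `x` and `y` (when `x ≠ y` are distinct leaves of a
tree with no repeated labels). -/
def lcaSize [DecidableEq V] : HCT V → V → V → ℕ
  | .leaf _, _, _ => 1
  | .node l r, x, y =>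
    if x ∈ leaves l ∧ y ∈ leaves l then lcaSize l x y
    else if x ∈ leaves r ∧ y ∈ leaves r then lcaSize r x y
    else (leaves l).length + (leaves r).length

end HCT

/-!
Split a tree at its root into subtrees with `a` and `b` leaves. A pair of leaves inside one
subtree has the same lowest common ancestor there, while each of the `2ab` ordered pairs
separated by the root contributes `a + b`. Hence twice the cost `C` satisfies
`2C(a+b) = 2C(a) + 2C(b) + 2ab(a+b)`, and `m ↦ (m³ - m)/3` solves this recurrence because
`(a+b)³ - (a+b) = (a³ - a) + (b³ - b) + 3ab(a+b)`.
-/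

theorem Finset.sum_offDiag_eq_two_nsmul_sum_lt {ι M : Type*} [LinearOrder ι] [AddCommMonoid M]
    (s : Finset ι) (f : ι → ι → M) (hf : ∀ x y, f x y = f y x) :
    ∑ p ∈ s.offDiag, f p.1 p.2 = 2 • ∑ p ∈ s ×ˢ s with p.1 < p.2, f p.1 p.2 := by
  have hsplit : s.offDiag = {p ∈ s ×ˢ s | p.1 < p.2} ∪ {p ∈ s ×ˢ s | p.2 < p.1} := by grind
  have hdisj : Disjoint {p ∈ s ×ˢ s | p.1 < p.2} {p ∈ s ×ˢ s | p.2 < p.1} := by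
    grind [Finset.disjoint_left]
  have hswap : ∑ p ∈ s ×ˢ s with p.2 < p.1, f p.1 p.2 = ∑ p ∈ s ×ˢ s with p.1 < p.2, f p.1 p.2 :=
    Finset.sum_nbij' Prod.swap Prod.swap (by grind) (by grind) (by simp) (by simp)
      (fun p _ => hf p.1 p.2)
  rw [hsplit, Finset.sum_union hdisj, hswap, two_nsmul]

namespace HCT

variable {V : Type} [DecidableEq V]

theorem lcaSize_comm (T : HCT V) (x y : V) : T.lcaSize x y = T.lcaSize y x := by
  induction T with
  | leaf _ => rfl
  | node l r ihl ihr =>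
    simp only [lcaSize, ihl, ihr, and_comm]

theorem lcaSize_node_of_mem_left {l r : HCT V} {x y : V} (hx : x ∈ l.leaves)
    (hy : y ∈ l.leaves) : (node l r).lcaSize x y = l.lcaSize x y := by
  simp [lcaSize, hx, hy]

theorem lcaSize_node_of_mem_right {l r : HCT V} {x y : V} (hxl : x ∉ l.leaves)
    (hx : x ∈ r.leaves) (hy : y ∈ r.leaves) : (node l r).lcaSize x y = r.lcaSize x y := by
  simp [lcaSize, hxl, hx, hy]

theorem lcaSize_node_of_separated {l r : HCT V} {x y : V}
    (hl : ¬(x ∈ l.leaves ∧ y ∈ l.leaves)) (hr : ¬(x ∈ r.leaves ∧ y ∈ r.leaves)) :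
    (node l r).lcaSize x y = l.leaves.length + r.leaves.length := by
  simp only [lcaSize, if_neg hl, if_neg hr]

/-- The Dasgupta cost of the complete graph on the leaves, with every edge counted twice. -/
def orderedPairCost (T : HCT V) : ℕ := ∑ p ∈ T.leaves.toFinset.offDiag, T.lcaSize p.1 p.2

theorem orderedPairCost_node {l r : HCT V} (h : (node l r).leaves.Nodup) :
    (node l r).orderedPairCost = l.orderedPairCost + r.orderedPairCost
      + 2 * (l.leaves.length * r.leaves.length * (l.leaves.length + r.leaves.length)) := by
  obtain ⟨hl, hr, hdisj_list⟩ := List.nodup_append.mp h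
  have hnot_r : ∀ x, x ∈ l.leaves → x ∉ r.leaves := fun x hx hx' => hdisj_list x hx x hx' rfl
  have hdisj : Disjoint l.leaves.toFinset r.leaves.toFinset := by
    simpa [Finset.disjoint_left] using hnot_r
  have hleft : ∑ p ∈ l.leaves.toFinset.offDiag, (node l r).lcaSize p.1 p.2 = l.orderedPairCost :=
    Finset.sum_congr rfl fun p hp => by
      simp only [Finset.mem_offDiag, List.mem_toFinset] at hp
      exact lcaSize_node_of_mem_left hp.1 hp.2.1
  have hright : ∑ p ∈ r.leaves.toFinset.offDiag, (node l r).lcaSize p.1 p.2 = r.orderedPairCost :=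
    Finset.sum_congr rfl fun p hp => by
      simp only [Finset.mem_offDiag, List.mem_toFinset] at hp
      exact lcaSize_node_of_mem_right (fun h => hnot_r _ h hp.1) hp.1 hp.2.1
  have hcross : ∀ x y, (x ∈ l.leaves ∧ y ∈ r.leaves) ∨ (x ∈ r.leaves ∧ y ∈ l.leaves) →
      (node l r).lcaSize x y = l.leaves.length + r.leaves.length := by
    rintro x y (⟨hx, hy⟩ | ⟨hx, hy⟩)
    · exact lcaSize_node_of_separated (fun h => hnot_r y h.2 hy) (fun h => hnot_r x hx h.1)
    · exact lcaSize_node_of_separated (fun h => hnot_r x h.1 hx) (fun h => hnot_r y hy h.2)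
  have hlr_sum : ∑ p ∈ l.leaves.toFinset ×ˢ r.leaves.toFinset, (node l r).lcaSize p.1 p.2
      = l.leaves.length * r.leaves.length * (l.leaves.length + r.leaves.length) := by
    rw [Finset.sum_const_nat fun p hp => hcross p.1 p.2 (.inl (by simpa using hp)),
      Finset.card_product, List.toFinset_card_of_nodup hl, List.toFinset_card_of_nodup hr]
  have hrl_sum : ∑ p ∈ r.leaves.toFinset ×ˢ l.leaves.toFinset, (node l r).lcaSize p.1 p.2
      = l.leaves.length * r.leaves.length * (l.leaves.length + r.leaves.length) := by
    rw [Finset.sum_const_nat fun p hp => hcross p.1 p.2 (.inr (by simpa using hp)),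
      Finset.card_product, List.toFinset_card_of_nodup hl, List.toFinset_card_of_nodup hr,
      Nat.mul_comm (r.leaves.length)]
  rw [orderedPairCost, leaves, List.toFinset_append, Finset.offDiag_union hdisj,
    Finset.sum_union, Finset.sum_union, Finset.sum_union, hleft, hright, hlr_sum, hrl_sum]
  · ring
  all_goals
    simp only [Finset.disjoint_left, Finset.mem_union, Finset.mem_offDiag, Finset.mem_product,
      List.mem_toFinset]
    grind

theorem three_mul_orderedPairCost_add (T : HCT V) (h : T.leaves.Nodup) :
    3 * T.orderedPairCost + 2 * T.leaves.length = 2 * T.leaves.length ^ 3 := by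
  induction T with
  | leaf x => simp [orderedPairCost, leaves]
  | node l r ihl ihr =>
    obtain ⟨hl, hr, -⟩ := List.nodup_append.mp h
    rw [orderedPairCost_node h, leaves, List.length_append]
    linear_combination ihl hl + ihr hr

end HCT

theorem stmt_18_general (n : ℕ) (T : HCT (Fin n))
    (hnodup : T.leaves.Nodup) (hall : ∀ x : Fin n, x ∈ T.leaves) :
    3 * ∑ p ∈ Finset.univ.filter (fun p : Fin n × Fin n => p.1 < p.2),
        T.lcaSize p.1 p.2 = n ^ 3 - n := by
  have hfinset : T.leaves.toFinset = Finset.univ := Finset.eq_univ_of_forall (by simpa using hall)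
  have hlength : T.leaves.length = n := by
    rw [← List.toFinset_card_of_nodup hnodup, hfinset, Finset.card_univ, Fintype.card_fin]
  have hcost := T.three_mul_orderedPairCost_add hnodup
  have hhalf : T.orderedPairCost =
      2 * ∑ p ∈ Finset.univ.filter (fun p : Fin n × Fin n => p.1 < p.2), T.lcaSize p.1 p.2 := by
    rw [HCT.orderedPairCost, hfinset, Finset.sum_offDiag_eq_two_nsmul_sum_lt _ _ T.lcaSize_comm,
      Finset.univ_product_univ, smul_eq_mul]
  rw [hhalf, hlength] at hcost
  have hcube : n ≤ n ^ 3 := Nat.le_self_pow (by norm_num) n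
  omega

/-- for every rooted binary tree with `n` leaves, the sum over unordered
pairs of distinct leaves of the number of leaves below their lowest common ancestor is
`(n³ − n)/3`; equivalently the Dasgupta cost of the unit-weight complete graph `K_n` is
`(n³ − n)/3` for every binary hierarchical-clustering tree. -/
theorem stmt_18 (n : ℕ) (hn : 1 ≤ n) (T : HCT (Fin n))
    (hnodup : T.leaves.Nodup) (hall : ∀ x : Fin n, x ∈ T.leaves) :
    3 * ∑ p ∈ Finset.univ.filter (fun p : Fin n × Fin n => p.1 < p.2),
        T.lcaSize p.1 p.2 = n ^ 3 - n :=
  stmt_18_general n T hnodup hall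
end
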